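/- Let Λ be the 2i×2i symmetric matrix with entries Λ_{a,b} = x_{2i+1} + x_a δ_{a,b} for positive reals x₁,…,x_{2i+1}, and let E = Σ_{a=1}^{2i+1} ∏_{b≠a} x_b. Then the inverse of Λ has entries (Λ⁻¹)_{a,b} = (1/E) · ∂E/∂x_a when a = b, and (Λ⁻¹)_{a,b} = −(x₁···x_{2i+1})/(E · x_a x_b) when a ≠ b. -/

import Mathlib

/-!
Write `Λ = c·𝟙𝟙ᵀ + diag(d)` with `c = x_{2i+1}` and `d_a = x_a`. By Sherman–Morrison,
`Λ⁻¹_{ab} = δ_{ab}/d_a - c / (d_a d_b (1 + c ∑ 1/d_k))`. With `P = ∏ x_j` we have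
`E = P ∑_j 1/x_j`, so `c / (1 + c ∑_{k ≤ 2i} 1/x_k) = P / E`, which gives the off-diagonal
entries. On the diagonal one uses that `E` is affine in `x_a`:
`E = x_a ∂E/∂x_a + ∏_{b ≠ a} x_b = x_a ∂E/∂x_a + P / x_a`.
-/

open Finset

namespace Matrix

variable {ι K : Type*} [Fintype ι] [DecidableEq ι] [Field K]

theorem inv_of_const_add_diagonal (c : K) (d : ι → K) (hd : ∀ k, d k ≠ 0)
    (hs : 1 + c * ∑ k, (d k)⁻¹ ≠ 0) :
    (of fun a b : ι => c + if a = b then d a else 0)⁻¹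
      = of fun a b => (if a = b then (d a)⁻¹ else 0)
          - c / (d a * d b * (1 + c * ∑ k, (d k)⁻¹)) := by
  refine inv_eq_right_inv ?_
  ext a b
  set s := 1 + c * ∑ k, (d k)⁻¹ with hs_def
  have hcol : ∑ k, c / (d k * d b * s) = (s - 1) / (d b * s) := by
    rw [sub_eq_of_eq_add' hs_def, mul_sum, sum_div]
    exact sum_congr rfl fun k _ => by field_simp
  simp only [mul_apply, of_apply, add_mul, ite_mul, zero_mul, mul_sub, sum_add_distrib,
    sum_sub_distrib, ← mul_sum, sum_ite_eq, sum_ite_eq', mem_univ, if_true, one_apply, hcol]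
  have hda := hd a
  have hdb := hd b
  split_ifs <;> field_simp <;> ring

end Matrix

namespace Finset

variable {ι R : Type*} [DecidableEq ι]

theorem mul_sum_prod_erase_erase_add_prod_erase [CommSemiring R] (s : Finset ι) (x : ι → R)
    {a : ι} (ha : a ∈ s) :
    x a * ∑ c ∈ s.erase a, ∏ d ∈ (s.erase a).erase c, x d + ∏ d ∈ s.erase a, x d
      = ∑ c ∈ s, ∏ d ∈ s.erase c, x d := by
  rw [← add_sum_erase s _ ha, add_comm, mul_sum]
  congr 1
  refine sum_congr rfl fun c hc => ?_
  rw [erase_right_comm]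
  exact mul_prod_erase _ x (mem_erase.mpr ⟨(ne_of_mem_erase hc).symm, ha⟩)

theorem prod_erase_eq_div₀ [CommGroupWithZero R] (s : Finset ι) (x : ι → R)
    {a : ι} (ha : a ∈ s) (hxa : x a ≠ 0) :
    ∏ d ∈ s.erase a, x d = (∏ d ∈ s, x d) / x a := by
  rw [eq_div_iff hxa, mul_comm, mul_prod_erase s x ha]

theorem sum_prod_erase_eq_prod_mul_sum_inv [Field R] (s : Finset ι) (x : ι → R)
    (hx : ∀ j ∈ s, x j ≠ 0) :
    ∑ c ∈ s, ∏ d ∈ s.erase c, x d = (∏ d ∈ s, x d) * ∑ c ∈ s, (x c)⁻¹ := by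
  rw [mul_sum]
  exact sum_congr rfl fun c hc =>
    (prod_erase_eq_div₀ s x hc (hx c hc)).trans (div_eq_mul_inv _ _)

end Finset

theorem Fin.last_mul_sum_prod_erase {K : Type*} [Field K] {n : ℕ} (x : Fin (n + 1) → K)
    (hx : ∀ j, x j ≠ 0) :
    x (Fin.last n) * ∑ c, ∏ d ∈ univ.erase c, x d
      = (∏ j, x j) * (1 + x (Fin.last n) * ∑ k : Fin n, (x k.castSucc)⁻¹) := by
  have hc := hx (Fin.last n)
  rw [sum_prod_erase_eq_prod_mul_sum_inv univ x fun j _ => hx j, Fin.sum_univ_castSucc]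
  field_simp
  ring

/-- Let `Λ` be the `2i × 2i` symmetric matrix with entries
`Λ_{a,b} = x_{2i+1} + x_a δ_{a,b}` for positive reals `x₁, …, x_{2i+1}`, and let
`E = ∑_{a=1}^{2i+1} ∏_{b ≠ a} x_b`.  Then the inverse of `Λ` has entries
`(Λ⁻¹)_{a,b} = (1/E) · ∂E/∂x_a` when `a = b` (where
`∂E/∂x_a = ∑_{c ≠ a} ∏_{b ≠ a, c} x_b`), and
`(Λ⁻¹)_{a,b} = −(x₁ ⋯ x_{2i+1}) / (E · x_a x_b)` when `a ≠ b`. -/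
theorem inv_diag_plus_const (i : ℕ) (x : Fin (2 * i + 1) → ℝ) (hx : ∀ j, 0 < x j)
    (a b : Fin (2 * i)) :
    (Matrix.of fun a b : Fin (2 * i) =>
        x (Fin.last (2 * i)) + if a = b then x a.castSucc else 0)⁻¹ a b
      = if a = b then
          (∑ c ∈ Finset.univ.erase a.castSucc,
              ∏ d ∈ (Finset.univ.erase a.castSucc).erase c, x d)
            / (∑ c : Fin (2 * i + 1), ∏ d ∈ Finset.univ.erase c, x d)
        else
          -((∏ j, x j)
            / ((∑ c : Fin (2 * i + 1), ∏ d ∈ Finset.univ.erase c, x d)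
                * x a.castSucc * x b.castSucc)) := by
  have hx0 j : x j ≠ 0 := (hx j).ne'
  have hdiag : x a.castSucc * ∑ c ∈ univ.erase a.castSucc,
        ∏ d ∈ (univ.erase a.castSucc).erase c, x d + (∏ j, x j) / x a.castSucc
      = ∑ c, ∏ d ∈ univ.erase c, x d := by
    rw [← prod_erase_eq_div₀ univ x (mem_univ _) (hx0 _)]
    exact mul_sum_prod_erase_erase_add_prod_erase univ x (mem_univ _)
  have hcE := Fin.last_mul_sum_prod_erase x hx0
  set c := x (Fin.last (2 * i))
  set s := 1 + c * ∑ k : Fin (2 * i), (x k.castSucc)⁻¹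
  set P := ∏ j, x j
  set E := ∑ c, ∏ d ∈ univ.erase c, x d
  have hs : 0 < s :=
    add_pos_of_pos_of_nonneg one_pos
      (mul_nonneg (hx _).le (sum_nonneg fun k _ => (inv_pos.mpr (hx _)).le))
  have hE : 0 < E := sum_pos (fun c _ => prod_pos fun d _ => hx d) univ_nonempty
  have hoff (a b : Fin (2 * i)) :
      c / (x a.castSucc * x b.castSucc * s) = P / (E * x a.castSucc * x b.castSucc) := by
    have := hx a.castSucc
    have := hx b.castSucc
    rw [div_eq_div_iff (by positivity) (by positivity)]
    linear_combination (x a.castSucc * x b.castSucc) * hcE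
  rw [Matrix.inv_of_const_add_diagonal _ _ (fun k => hx0 _) hs.ne', Matrix.of_apply, hoff]
  split_ifs with hab
  · subst hab
    have hxa := hx0 a.castSucc
    field_simp at hdiag ⊢
    linear_combination -hdiag
  · ring
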